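/- No-go for isotropic-like states: let φ be a pure state with R_F(φ) = F_F(φ)^{-1} =: λ, let σ ∈ F satisfy φ ≤ λσ, and fix ε ∈ (0,1) with ε ≤ (λ−1)/λ. Define ρ_ε = (1−ε)φ + ε(λσ−φ)/(λ−1). Then for any state τ with Ω_F(τ) ≤ Ω_F(ρ_ε), the fidelity with φ satisfies ⟨φ|τ|φ⟩ ≤ 1 − ε'. That is, if ⟨φ|τ|φ⟩ ≥ 1−ε' with ε' < ε, then Ω_F(τ) > Ω_F(ρ_ε), so no resource-non-generating transformation (under which Ω_F is monotone) can map ρ_ε to τ. -/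

import Mathlib

/-! The state `ρ_ε` is a positive combination `c φ + d σ` of `φ` and the free state `σ`, and `σ`
itself witnesses `Ω_F(ρ_ε) ≤ (1-ε)(λ-1)/ε`. Conversely, for any `σ' ∈ F`, testing the Loewner
inequalities `τ ≤ l σ'` and `σ' ≤ l τ` against the two-outcome measurement `{φ, 1 - φ}` gives
`Rmax(τ‖σ') ≥ (1-ε')/f` and `Rmax(σ'‖τ) ≥ (1-f)/ε'`, so `Ω_F(τ) ≥ (1-ε')(λ-1)/ε'`; and
`(1-x)/x` is strictly decreasing. -/

open scoped ENNReal ComplexOrder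
open Matrix

noncomputable section

variable {ι κ : Type*}

/-- Loewner order: `A ≤ B` iff `B - A` is positive semidefinite. -/
def Loe [Fintype ι] (A B : Matrix ι ι ℂ) : Prop := (B - A).PosSemidef

/-- The (non-logarithmic) max-relative entropy `Rmax(ρ‖σ) = inf {λ : ρ ≤ λσ}`,
with the convention `inf ∅ = ∞`. -/
noncomputable def Rmax [Fintype ι] (ρ σ : Matrix ι ι ℂ) : ℝ≥0∞ :=
  sInf {x : ℝ≥0∞ | ∃ l : ℝ, 0 ≤ l ∧ x = ENNReal.ofReal l ∧ ((l : ℂ) • σ - ρ).PosSemidef}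

/-- A density matrix: positive semidefinite with unit trace. -/
def IsState [Fintype ι] (ρ : Matrix ι ι ℂ) : Prop := ρ.PosSemidef ∧ ρ.trace = 1

/-- The projective robustness `Ω_F(ρ) = inf_{σ∈F} Rmax(ρ‖σ) · Rmax(σ‖ρ)`. -/
noncomputable def Omega [Fintype ι] (F : Set (Matrix ι ι ℂ)) (ρ : Matrix ι ι ℂ) : ℝ≥0∞ :=
  ⨅ σ ∈ F, Rmax ρ σ * Rmax σ ρ

/-- The cone generated by `F`: `{cσ : c ≥ 0, σ ∈ F}`. -/
def coneF [Fintype ι] (F : Set (Matrix ι ι ℂ)) : Set (Matrix ι ι ℂ) :=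
  {X | ∃ c : ℝ, 0 ≤ c ∧ ∃ σ ∈ F, X = (c : ℂ) • σ}

/-- The affine hull of `F` (real affine combinations). -/
def affHull [Fintype ι] (F : Set (Matrix ι ι ℂ)) : Set (Matrix ι ι ℂ) :=
  {Z | ∃ (k : ℕ) (c : Fin k → ℝ) (σ : Fin k → Matrix ι ι ℂ),
    (∀ i, σ i ∈ F) ∧ (∑ i, c i) = 1 ∧ Z = ∑ i, ((c i : ℂ) • σ i)}

/-- The generalised robustness `R_F(ρ) = inf_{σ∈F} Rmax(ρ‖σ)`. -/
noncomputable def RF [Fintype ι] (F : Set (Matrix ι ι ℂ)) (ρ : Matrix ι ι ℂ) : ℝ≥0∞ :=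
  ⨅ σ ∈ F, Rmax ρ σ

/-- The resource weight `W_F(ρ) = (inf_{σ∈F} Rmax(σ‖ρ))⁻¹`. -/
noncomputable def WF [Fintype ι] (F : Set (Matrix ι ι ℂ)) (ρ : Matrix ι ι ℂ) : ℝ≥0∞ :=
  (⨅ σ ∈ F, Rmax σ ρ)⁻¹

namespace Matrix

variable [Fintype ι]

lemma trace_mul_vecMulVec_star (A : Matrix ι ι ℂ) (ψ : ι → ℂ) :
    (A * vecMulVec ψ (star ψ)).trace = star ψ ⬝ᵥ (A *ᵥ ψ) := by
  rw [mul_vecMulVec, dotProduct_comm]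
  rfl

lemma PosSemidef.re_dotProduct_mulVec_le_re_trace {A : Matrix ι ι ℂ} (hA : A.PosSemidef)
    {ψ : ι → ℂ} (hψ : star ψ ⬝ᵥ ψ = 1) : (star ψ ⬝ᵥ (A *ᵥ ψ)).re ≤ A.trace.re := by
  classical
  set P : Matrix ι ι ℂ := 1 - vecMulVec ψ (star ψ)
  have hPH : Pᴴ = P := by simp [P, conjTranspose_vecMulVec]
  have hPP : P * P = P := by
    simp only [P, sub_mul, mul_sub, one_mul, mul_one, vecMulVec_mul_vecMulVec, hψ, one_smul]
    abel
  have hgap : A.trace - star ψ ⬝ᵥ (A *ᵥ ψ) = (Pᴴ * A * P).trace := by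
    rw [hPH, mul_assoc, trace_mul_comm, mul_assoc, hPP]
    simp [P, mul_sub, trace_sub, trace_mul_vecMulVec_star]
  have := (Complex.nonneg_iff.mp ((hA.conjTranspose_mul_mul_same P).trace_nonneg)).1
  rw [← hgap, Complex.sub_re] at this
  linarith

end Matrix

section

variable [Fintype ι]

lemma re_dotProduct_smul_sub_mulVec (l : ℝ) (M N : Matrix ι ι ℂ) (ψ : ι → ℂ) :
    (star ψ ⬝ᵥ (((l : ℂ) • M - N) *ᵥ ψ)).re
      = l * (star ψ ⬝ᵥ (M *ᵥ ψ)).re - (star ψ ⬝ᵥ (N *ᵥ ψ)).re := by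
  simp [sub_mulVec, smul_mulVec, dotProduct_sub, dotProduct_smul]

lemma Rmax_le_ofReal {ρ σ : Matrix ι ι ℂ} {l : ℝ} (hl : 0 ≤ l)
    (h : ((l : ℂ) • σ - ρ).PosSemidef) : Rmax ρ σ ≤ ENNReal.ofReal l :=
  sInf_le ⟨l, hl, rfl, h⟩

lemma ofReal_le_Rmax {ρ σ : Matrix ι ι ℂ} {m : ℝ}
    (h : ∀ l : ℝ, 0 ≤ l → ((l : ℂ) • σ - ρ).PosSemidef → m ≤ l) :
    ENNReal.ofReal m ≤ Rmax ρ σ := by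
  refine le_sInf ?_
  rintro x ⟨l, hl, rfl, hpsd⟩
  exact ENNReal.ofReal_le_ofReal (h l hl hpsd)

lemma Rmax_smul_add_smul_le {φ σ : Matrix ι ι ℂ} {lam c d : ℝ} (hle : Loe φ ((lam : ℂ) • σ))
    (hlam : 0 ≤ lam) (hc : 0 ≤ c) (hd : 0 ≤ d) :
    Rmax ((c : ℂ) • φ + (d : ℂ) • σ) σ ≤ ENNReal.ofReal (c * lam + d) := by
  refine Rmax_le_ofReal (by positivity) ?_
  have h : ((c * lam + d : ℝ) : ℂ) • σ - ((c : ℂ) • φ + (d : ℂ) • σ)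
      = (c : ℂ) • ((lam : ℂ) • σ - φ) := by
    push_cast
    match_scalars <;> ring
  rw [h]
  exact hle.smul (Complex.zero_le_real.mpr hc)

lemma Rmax_le_smul_add_smul {φ σ : Matrix ι ι ℂ} {c d : ℝ} (hφ : φ.PosSemidef)
    (hc : 0 ≤ c) (hd : 0 < d) :
    Rmax σ ((c : ℂ) • φ + (d : ℂ) • σ) ≤ ENNReal.ofReal d⁻¹ := by
  refine Rmax_le_ofReal (by positivity) ?_
  have h : ((d⁻¹ : ℝ) : ℂ) • ((c : ℂ) • φ + (d : ℂ) • σ) - σ = ((d⁻¹ * c : ℝ) : ℂ) • φ := by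
    have : (d : ℂ) ≠ 0 := by exact_mod_cast hd.ne'
    push_cast
    match_scalars <;> simp [this]
  rw [h]
  exact hφ.smul (Complex.zero_le_real.mpr (by positivity))

lemma Omega_smul_add_smul_le {F : Set (Matrix ι ι ℂ)} {φ σ : Matrix ι ι ℂ} {lam c d : ℝ}
    (hσ : σ ∈ F) (hφ : φ.PosSemidef) (hle : Loe φ ((lam : ℂ) • σ)) (hlam : 0 ≤ lam)
    (hc : 0 ≤ c) (hd : 0 < d) :
    Omega F ((c : ℂ) • φ + (d : ℂ) • σ) ≤ ENNReal.ofReal ((c * lam + d) / d) :=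
  calc Omega F ((c : ℂ) • φ + (d : ℂ) • σ)
      ≤ Rmax ((c : ℂ) • φ + (d : ℂ) • σ) σ * Rmax σ ((c : ℂ) • φ + (d : ℂ) • σ) :=
        iInf₂_le σ hσ
    _ ≤ ENNReal.ofReal (c * lam + d) * ENNReal.ofReal d⁻¹ :=
        mul_le_mul' (Rmax_smul_add_smul_le hle hlam hc hd.le) (Rmax_le_smul_add_smul hφ hc hd)
    _ = ENNReal.ofReal ((c * lam + d) / d) := by
        rw [← ENNReal.ofReal_mul (by positivity), div_eq_mul_inv]

variable {ψ : ι → ℂ}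

lemma ofReal_div_le_Rmax_of_re_le {ρ σ : Matrix ι ι ℂ} {f t : ℝ} (hf : 0 < f)
    (hσ : (star ψ ⬝ᵥ (σ *ᵥ ψ)).re ≤ f) (hρ : t ≤ (star ψ ⬝ᵥ (ρ *ᵥ ψ)).re) :
    ENNReal.ofReal (t / f) ≤ Rmax ρ σ := by
  refine ofReal_le_Rmax fun l hl hpsd => ?_
  have hq := (Complex.nonneg_iff.mp (hpsd.dotProduct_mulVec_nonneg ψ)).1
  rw [re_dotProduct_smul_sub_mulVec] at hq
  rw [div_le_iff₀ hf]
  nlinarith [mul_le_mul_of_nonneg_left hσ hl]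

lemma ofReal_div_le_Rmax_of_le_re (hψ : star ψ ⬝ᵥ ψ = 1) {ρ σ : Matrix ι ι ℂ} {f δ : ℝ}
    (hρ1 : ρ.trace = 1) (hσ1 : σ.trace = 1) (hδ : 0 < δ)
    (hρ : (star ψ ⬝ᵥ (ρ *ᵥ ψ)).re ≤ f) (hσ : 1 - δ ≤ (star ψ ⬝ᵥ (σ *ᵥ ψ)).re) :
    ENNReal.ofReal ((1 - f) / δ) ≤ Rmax ρ σ := by
  refine ofReal_le_Rmax fun l hl hpsd => ?_
  have hq := hpsd.re_dotProduct_mulVec_le_re_trace hψ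
  rw [re_dotProduct_smul_sub_mulVec, trace_sub, trace_smul, hρ1, hσ1] at hq
  simp only [smul_eq_mul, mul_one, Complex.sub_re, Complex.ofReal_re, Complex.one_re] at hq
  rw [div_le_iff₀ hδ]
  nlinarith [mul_le_mul_of_nonneg_left hσ hl]


lemma ofReal_le_Omega_of_fidelity (hψ : star ψ ⬝ᵥ ψ = 1) {F : Set (Matrix ι ι ℂ)}
    (hF : ∀ σ ∈ F, σ.trace = 1) {f : ℝ} (hf0 : 0 < f) (hf1 : f ≤ 1)
    (hfmax : ∀ σ ∈ F, (star ψ ⬝ᵥ (σ *ᵥ ψ)).re ≤ f) {τ : Matrix ι ι ℂ} (hτ : τ.trace = 1)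
    {ε : ℝ} (hε : 0 < ε) (hfid : 1 - ε ≤ (star ψ ⬝ᵥ (τ *ᵥ ψ)).re) :
    ENNReal.ofReal ((ε⁻¹ - 1) * (f⁻¹ - 1)) ≤ Omega F τ := by
  refine le_iInf₂ fun σ hσ => ?_
  calc ENNReal.ofReal ((ε⁻¹ - 1) * (f⁻¹ - 1))
      = ENNReal.ofReal ((1 - ε) / f * ((1 - f) / ε)) := by
        congr 1
        field_simp
    _ ≤ ENNReal.ofReal ((1 - ε) / f) * ENNReal.ofReal ((1 - f) / ε) :=
        (ENNReal.ofReal_mul' (div_nonneg (by linarith) hε.le)).le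
    _ ≤ Rmax τ σ * Rmax σ τ :=
        mul_le_mul' (ofReal_div_le_Rmax_of_re_le hf0 (hfmax σ hσ) hfid)
          (ofReal_div_le_Rmax_of_le_re hψ (hF σ hσ) hτ hε (hfmax σ hσ) hfid)

end

theorem isotropic_fidelity_no_go_general [Fintype ι]
    (F : Set (Matrix ι ι ℂ))
    (hFstates : ∀ σ ∈ F, IsState σ)
    (ψ : ι → ℂ) (hψ : star ψ ⬝ᵥ ψ = 1)
    (φ : Matrix ι ι ℂ) (hφ : φ = vecMulVec ψ (star ψ))
    (f : ℝ) (hf0 : 0 < f) (hf1 : f < 1)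
    (hfmax : ∀ σ' ∈ F, (star ψ ⬝ᵥ (σ' *ᵥ ψ)).re ≤ f)
    (lam : ℝ) (hlamf : lam = f⁻¹)
    (σ : Matrix ι ι ℂ) (hσ : σ ∈ F) (hle : Loe φ ((lam : ℂ) • σ))
    (ε : ℝ) (hε0 : 0 < ε) (hε1 : ε < 1) (hεub : ε ≤ (lam - 1) / lam)
    (ρε : Matrix ι ι ℂ)
    (hρεdef : ρε = ((1 - ε : ℝ) : ℂ) • φ + ((ε / (lam - 1) : ℝ) : ℂ) • ((lam : ℂ) • σ - φ))
    (τ : Matrix ι ι ℂ) (hτ : IsState τ)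
    (ε' : ℝ) (hε'0 : 0 < ε') (hε'ε : ε' < ε)
    (hfid : 1 - ε' ≤ (star ψ ⬝ᵥ (τ *ᵥ ψ)).re) :
    Omega F ρε < Omega F τ := by
  have hlam : 1 < lam := hlamf ▸ (one_lt_inv₀ hf0).mpr hf1
  have hlam1 : 0 < lam - 1 := by linarith
  -- the weight of `φ` is nonnegative exactly when `ε ≤ (λ-1)/λ`
  have hρε : ρε = ((1 - ε - ε / (lam - 1) : ℝ) : ℂ) • φ + ((ε * lam / (lam - 1) : ℝ) : ℂ) • σ := by
    rw [hρεdef]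
    push_cast
    match_scalars <;> ring
  have hc : 0 ≤ 1 - ε - ε / (lam - 1) := by
    rw [le_div_iff₀ (by linarith)] at hεub
    rw [sub_sub, sub_nonneg, ← le_sub_iff_add_le', div_le_iff₀ hlam1]
    nlinarith
  have upper := Omega_smul_add_smul_le (d := ε * lam / (lam - 1)) hσ
    (hφ ▸ posSemidef_vecMulVec_self_star ψ) hle (by linarith) hc (by positivity)
  have lower := ofReal_le_Omega_of_fidelity hψ (fun σ hσ => (hFstates σ hσ).2) hf0 hf1.le
    hfmax hτ.2 hε'0 hfid
  rw [← hρε] at upper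
  rw [← hlamf] at lower
  calc Omega F ρε ≤ ENNReal.ofReal ((ε⁻¹ - 1) * (lam - 1)) := upper.trans_eq <| by
        congr 1
        field_simp
        ring
    _ < ENNReal.ofReal ((ε'⁻¹ - 1) * (lam - 1)) := by
        have hε'1 : 1 < ε'⁻¹ := (one_lt_inv₀ hε'0).mpr (hε'ε.trans hε1)
        rw [ENNReal.ofReal_lt_ofReal_iff (mul_pos (sub_pos.mpr hε'1) hlam1)]
        gcongr
    _ ≤ Omega F τ := lower

/-- No-go for isotropic-like states: let `φ = |ψ⟩⟨ψ|` with
`R_F(φ) = F_F(φ)⁻¹ = λ`, `σ ∈ F` with `φ ≤ λσ`, and `ε ∈ (0,1)` with `ε ≤ (λ-1)/λ`.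
For `ρ_ε = (1-ε)φ + ε(λσ-φ)/(λ-1)`, any state `τ` with fidelity `⟨φ|τ|φ⟩ ≥ 1-ε'` for
`0 < ε' < ε` satisfies `Ω_F(τ) > Ω_F(ρ_ε)`; hence (by monotonicity of `Ω_F`) no free
transformation maps `ρ_ε` to `τ`. -/
theorem isotropic_fidelity_no_go [Fintype ι]
    (F : Set (Matrix ι ι ℂ)) (hF : IsClosed F) (hconv : Convex ℝ F)
    (hFstates : ∀ σ ∈ F, IsState σ)
    (ψ : ι → ℂ) (hψ : star ψ ⬝ᵥ ψ = 1)
    (φ : Matrix ι ι ℂ) (hφ : φ = vecMulVec ψ (star ψ))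
    (f : ℝ) (hf0 : 0 < f) (hf1 : f < 1)
    (hfmax : ∀ σ' ∈ F, (star ψ ⬝ᵥ (σ' *ᵥ ψ)).re ≤ f)
    (lam : ℝ) (hlamf : lam = f⁻¹) (hRF : RF F φ = ENNReal.ofReal lam)
    (σ : Matrix ι ι ℂ) (hσ : σ ∈ F) (hle : Loe φ ((lam : ℂ) • σ))
    (ε : ℝ) (hε0 : 0 < ε) (hε1 : ε < 1) (hεub : ε ≤ (lam - 1) / lam)
    (ρε : Matrix ι ι ℂ)
    (hρεdef : ρε = ((1 - ε : ℝ) : ℂ) • φ + ((ε / (lam - 1) : ℝ) : ℂ) • ((lam : ℂ) • σ - φ))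
    (τ : Matrix ι ι ℂ) (hτ : IsState τ)
    (ε' : ℝ) (hε'0 : 0 < ε') (hε'ε : ε' < ε)
    (hfid : 1 - ε' ≤ (star ψ ⬝ᵥ (τ *ᵥ ψ)).re) :
    Omega F ρε < Omega F τ :=
  isotropic_fidelity_no_go_general F hFstates ψ hψ φ hφ f hf0 hf1 hfmax lam hlamf σ hσ hle ε hε0 hε1
    hεub ρε hρεdef τ hτ ε' hε'0 hε'ε hfid

end
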